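/- Let α ≥ 0, p ≥ 0, t > 0, θ ∈ ℝ, x, u ∈ ℝ and y, v, w ∈ ℂ. If the two 3×3 complex matrices [[α, 0, −αe^{iθ}], [0, x, y], [−αe^{−iθ}, ȳ, α]] and [[p, v, −tp e^{−iθ}], [v̄, u, w], [−tp e^{iθ}, w̄, t²p]] are both positive semidefinite, then y = 0 and w = −v̄ t e^{−iθ}. -/

import Mathlib

/-!
For a positive semidefinite matrix `M`, `⟪z, M z⟫ = 0` forces `M z = 0`. Each of the two
matrices sends an explicit vector `z` with vanishing middle entry to a multiple of the middle
basis vector, so `⟪z, M z⟫ = 0` and that multiple must vanish: `z = (e^{iθ}, 0, 1)` gives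
`y = 0`, and `z = (t, 0, e^{iθ})` gives `v̄ t + w e^{iθ} = 0`.
-/

open Complex Matrix ComplexOrder

theorem Matrix.PosSemidef.eq_zero_of_mulVec_eq_single {n 𝕜 : Type*} [Fintype n] [DecidableEq n]
    [RCLike 𝕜] {A : Matrix n n 𝕜} (hA : A.PosSemidef) {x : n → 𝕜} {j : n} {c : 𝕜}
    (hx : x j = 0) (hAx : A *ᵥ x = Pi.single j c) : c = 0 := by
  have hform : star x ⬝ᵥ A *ᵥ x = 0 := by simp [hAx, hx]
  simpa [hAx] using congrFun ((hA.dotProduct_mulVec_zero_iff x).mp hform) j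

theorem lemma_pos_entries (α p t θ x u : ℝ) (y v w : ℂ)
    (h1 : (!![(α : ℂ), 0, -(α : ℂ) * exp (θ * I);
              0, (x : ℂ), y;
              -(α : ℂ) * exp (-θ * I), star y, (α : ℂ)]).PosSemidef)
    (h2 : (!![(p : ℂ), v, -((t : ℂ) * p) * exp (-θ * I);
              star v, (u : ℂ), w;
              -((t : ℂ) * p) * exp (θ * I), star w, ((t : ℂ) ^ 2 * p)]).PosSemidef) :
    y = 0 ∧ w = -(star v) * t * exp (-θ * I) := by
  have hy : y = 0 :=
    h1.eq_zero_of_mulVec_eq_single (x := ![exp (θ * I), 0, 1]) (j := 1) rfl <| by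
      ext i
      fin_cases i <;> simp [mulVec, dotProduct, Fin.sum_univ_three, exp_neg]
  have hw : star v * t + w * exp (θ * I) = 0 :=
    h2.eq_zero_of_mulVec_eq_single (x := ![(t : ℂ), 0, exp (θ * I)]) (j := 1) rfl <| by
      ext i
      fin_cases i <;> simp [mulVec, dotProduct, Fin.sum_univ_three, exp_neg] <;> ring
  refine ⟨hy, ?_⟩
  rw [neg_mul (θ : ℂ), exp_neg]
  field_simp
  linear_combination hw
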